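/- In the algebra A_0, an element a ∈ A_+ with initial idempotent I_i and final idempotent I_j and no factors of V_0 or V_{N+1} is uniquely determined by its Alexander grading: two monomials in the generators U_k, s_k with the same initial idempotent and the same Alexander grading are equal. -/

import Mathlib

/-- The ground ring 𝔽₂ (we restrict to monomials with no factors of V₀, V_{N+1}). -/
abbrev GroundRing := ZMod 2

/-- Generators of the associative algebra `A₀`: idempotents `I i`, and elements
`U i`, `s i`, for `i` ranging over `Fin N` (indices are taken mod `N`). -/
inductive AGen (N : ℕ) : Type
  | I : Fin N → AGen N
  | U : Fin N → AGen N
  | s : Fin N → AGen N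
deriving DecidableEq

variable (N : ℕ) [NeZero N]

open FreeAlgebra in
/-- The defining relations of `A₀` from the paper:
`I_i I_j = δ_{ij} I_i`; `I_j U_i = U_i I_j = δ_{ij} U_i`; `I_j s_i = δ_{ij} s_i`;
`s_i I_j = s_i` iff `j = i+1 (mod N)`; `U_i U_j = 0` for `i ≠ j`;
`U_i s_j = s_j U_i = 0`; `s_i s_j = 0` unless `j = i+1 (mod N)`. -/
inductive ARel : FreeAlgebra GroundRing (AGen N) → FreeAlgebra GroundRing (AGen N) → Prop
  | II (i j : Fin N) : ARel (ι GroundRing (AGen.I i) * ι GroundRing (AGen.I j))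
      (if i = j then ι GroundRing (AGen.I i) else 0)
  | IU (i j : Fin N) : ARel (ι GroundRing (AGen.I j) * ι GroundRing (AGen.U i))
      (if i = j then ι GroundRing (AGen.U i) else 0)
  | UI (i j : Fin N) : ARel (ι GroundRing (AGen.U i) * ι GroundRing (AGen.I j))
      (if i = j then ι GroundRing (AGen.U i) else 0)
  | Is (i j : Fin N) : ARel (ι GroundRing (AGen.I j) * ι GroundRing (AGen.s i))
      (if j = i then ι GroundRing (AGen.s i) else 0)
  | sI (i j : Fin N) : ARel (ι GroundRing (AGen.s i) * ι GroundRing (AGen.I j))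
      (if j = i + 1 then ι GroundRing (AGen.s i) else 0)
  | UU (i j : Fin N) : i ≠ j → ARel (ι GroundRing (AGen.U i) * ι GroundRing (AGen.U j)) 0
  | Us (i j : Fin N) : ARel (ι GroundRing (AGen.U i) * ι GroundRing (AGen.s j)) 0
  | sU (i j : Fin N) : ARel (ι GroundRing (AGen.s j) * ι GroundRing (AGen.U i)) 0
  | ss (i j : Fin N) : j ≠ i + 1 → ARel (ι GroundRing (AGen.s i) * ι GroundRing (AGen.s j)) 0

/-- The associative algebra `A₀`, presented by the above generators and relations. -/
abbrev A0 := RingQuot (ARel N)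

/-- The idempotent generator `I i` of `A₀`. -/
noncomputable def aI (i : Fin N) : A0 N :=
  RingQuot.mkAlgHom GroundRing (ARel N) (FreeAlgebra.ι GroundRing (AGen.I i))

/-- The generator `U i` of `A₀`. -/
noncomputable def aU (i : Fin N) : A0 N :=
  RingQuot.mkAlgHom GroundRing (ARel N) (FreeAlgebra.ι GroundRing (AGen.U i))

/-- The generator `s i` of `A₀`. -/
noncomputable def aS (i : Fin N) : A0 N :=
  RingQuot.mkAlgHom GroundRing (ARel N) (FreeAlgebra.ι GroundRing (AGen.s i))

open Fin.NatCast in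
/-- `s_{ii} = s_i s_{i+1} ⋯ s_{i-1}`, the full cyclic product of the `N` generators
`s_j` starting at index `i` (indices mod `N`). -/
noncomputable def scyc (i : Fin N) : A0 N :=
  ((List.range N).map (fun k => aS N (i + (k : Fin N)))).prod

/-- Letters for monomials in the augmentation ideal of `A₀`: the generators `U k`, `s k`. -/
inductive APGen (N : ℕ) : Type
  | U : Fin N → APGen N
  | s : Fin N → APGen N
deriving DecidableEq

/-- The image in `A₀` of a letter. -/
noncomputable def apToA0 : APGen N → A0 N
  | APGen.U i => aU N i
  | APGen.s i => aS N i

/-- The product in `A₀` of a word in the letters `U k, s k`. -/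
noncomputable def prodA (w : List (APGen N)) : A0 N := (w.map (apToA0 N)).prod

/-- The Alexander grading of a letter, valued in `ℤ^{2N}` = `H₀(S¹ ∖ {p₁,…,p_{2N}}; ℤ)`:
`A(U_j) = h_{2j-1}` and `A(s_j) = h_{2j}` (0-indexed as `2j` and `2j+1`). -/
def alexGen : APGen N → (Fin (2 * N) → ℤ)
  | APGen.U j => fun t => if t.val = 2 * j.val then 1 else 0
  | APGen.s j => fun t => if t.val = 2 * j.val + 1 then 1 else 0

/-- The Alexander grading of a word: the sum of the gradings of its letters. -/
def alexW (w : List (APGen N)) : Fin (2 * N) → ℤ := (w.map (alexGen N)).sum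

/-- The index of the initial idempotent of a letter: `I_j U_j = U_j`, `I_j s_j = s_j`. -/
def initIdxA : APGen N → Fin N
  | APGen.U j => j
  | APGen.s j => j

/-!
A nonzero monomial contains no adjacent pair killed by the relations, so each letter determines
the next one (`U_i` can only be followed by `U_i`, and `s_i` by `s_{i+1}`): the word is the orbit
of its first letter under this successor map. Since distinct letters are graded by distinct basis
vectors, the Alexander grading of a word is exactly its multiset of letters. It therefore fixes
the length, and it fixes the first letter too: the first letter of one word occurs in the other,
and the orbit of `s_i` never meets `U_i`.
-/

section AlexanderGrading

variable {N}
omit [NeZero N]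

def alexIdx : APGen N → Fin (2 * N)
  | APGen.U j => ⟨2 * j, by have := j.isLt; omega⟩
  | APGen.s j => ⟨2 * j + 1, by have := j.isLt; omega⟩

lemma alexIdx_injective : Function.Injective (alexIdx (N := N)) := by
  rintro (i | i) (j | j) h <;> simp only [alexIdx, Fin.mk.injEq, reduceCtorEq, APGen.U.injEq,
    APGen.s.injEq] at h ⊢ <;> omega

lemma alexGen_eq_single (a : APGen N) : alexGen N a = Pi.single (alexIdx a) 1 := by
  funext t
  cases a <;> simp [alexGen, alexIdx, Pi.single_apply, Fin.ext_iff]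

lemma alexW_apply_alexIdx (w : List (APGen N)) (a : APGen N) :
    alexW N w (alexIdx a) = w.count a := by
  induction w with
  | nil => simp [alexW]
  | cons b w ih =>
    simp only [alexW, List.map_cons, List.sum_cons, Pi.add_apply] at ih ⊢
    rw [ih, alexGen_eq_single]
    by_cases h : a = b <;> simp [h, Ne.symm, alexIdx_injective.eq_iff, add_comm]

theorem alexW_eq_alexW_iff_perm {w₁ w₂ : List (APGen N)} :
    alexW N w₁ = alexW N w₂ ↔ w₁.Perm w₂ := by
  refine ⟨fun h => List.perm_iff_count.mpr fun a => ?_, fun h => (h.map _).sum_eq⟩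
  exact_mod_cast (alexW_apply_alexIdx w₁ a).symm.trans ((congrFun h _).trans
    (alexW_apply_alexIdx w₂ a))

end AlexanderGrading

theorem List.eq_iterate_of_isChain {α : Type*} {f : α → α} {a : α} {l : List α}
    (hl : (a :: l).IsChain (fun x y => f x = y)) : a :: l = List.iterate f a (l.length + 1) :=
  List.ext_getElem (by simp) fun i hi _ => by
    rw [List.getElem_iterate, ← hl.iterate_eq_of_apply_eq i hi]
    rfl

/-- The only letter `b` for which `a b` can be nonzero in `A₀`. -/
def nextLetter : APGen N → APGen N
  | APGen.U i => APGen.U i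
  | APGen.s i => APGen.s (i + 1)

lemma apToA0_mul_eq_zero_of_nextLetter_ne {a b : APGen N} (h : nextLetter N a ≠ b) :
    apToA0 N a * apToA0 N b = 0 := by
  have hmk : ∀ {x : FreeAlgebra GroundRing (AGen N)}, ARel N x 0 →
      RingQuot.mkAlgHom GroundRing (ARel N) x = 0 := fun hx => by
    rw [RingQuot.mkAlgHom_rel _ hx, map_zero]
  cases a <;> cases b <;> simp only [nextLetter, ne_eq, APGen.U.injEq, APGen.s.injEq] at h <;>
    simp only [apToA0, aU, aS, ← map_mul]
  · exact hmk (ARel.UU _ _ h)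
  · exact hmk (ARel.Us _ _)
  · exact hmk (ARel.sU _ _)
  · exact hmk (ARel.ss _ _ (Ne.symm h))

lemma prodA_cons (a : APGen N) (w : List (APGen N)) :
    prodA N (a :: w) = apToA0 N a * prodA N w := by
  simp [prodA]

lemma isChain_nextLetter_of_prodA_ne_zero :
    ∀ {w : List (APGen N)}, prodA N w ≠ 0 → w.IsChain (fun a b => nextLetter N a = b)
  | [], _ => List.isChain_nil
  | [a], _ => List.isChain_singleton a
  | a :: b :: w, h => by
    rw [prodA_cons] at h
    refine List.isChain_cons_cons.mpr ⟨by_contra fun hab => h ?_,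
      isChain_nextLetter_of_prodA_ne_zero (right_ne_zero_of_mul h)⟩
    rw [prodA_cons, ← mul_assoc, apToA0_mul_eq_zero_of_nextLetter_ne N hab, zero_mul]

lemma nextLetter_iterate_eq_self_of_initIdxA_eq (a : APGen N) (m : ℕ)
    (h : initIdxA N ((nextLetter N)^[m] a) = initIdxA N a) : (nextLetter N)^[m] a = a := by
  cases a with
  | U i => exact Function.iterate_fixed rfl m
  | s i =>
    have hs : Function.Semiconj APGen.s (· + 1) (nextLetter N) := fun _ => rfl
    rw [← hs.iterate_right m i] at h ⊢
    rw [show (· + 1 : Fin N → Fin N)^[m] i = i from h]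

theorem monomial_determined_by_alexander
    (w₁ w₂ : List (APGen N))
    (hz₁ : prodA N w₁ ≠ 0) (hz₂ : prodA N w₂ ≠ 0)
    (hidem : w₁.head?.map (initIdxA N) = w₂.head?.map (initIdxA N))
    (halex : alexW N w₁ = alexW N w₂) :
    prodA N w₁ = prodA N w₂ := by
  have hperm : w₁.Perm w₂ := alexW_eq_alexW_iff_perm.mp halex
  rcases w₁ with _ | ⟨a₁, t₁⟩ <;> rcases w₂ with _ | ⟨a₂, t₂⟩
  · rfl
  · simpa using hperm.length_eq
  · simpa using hperm.length_eq
  have hlen : t₁.length = t₂.length := by simpa using hperm.length_eq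
  have hw₁ := List.eq_iterate_of_isChain (isChain_nextLetter_of_prodA_ne_zero N hz₁)
  have hw₂ := List.eq_iterate_of_isChain (isChain_nextLetter_of_prodA_ne_zero N hz₂)
  obtain ⟨m, -, rfl⟩ : ∃ m < t₂.length + 1, a₁ = (nextLetter N)^[m] a₂ :=
    List.mem_iterate.mp (hw₂ ▸ hperm.subset List.mem_cons_self)
  have ha : (nextLetter N)^[m] a₂ = a₂ :=
    nextLetter_iterate_eq_self_of_initIdxA_eq N a₂ m (by simpa using hidem)
  rw [hw₁, hw₂, ha, hlen]
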